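/- Let U ⊆ ℝⁿ be open and let f, g, g^μ, g^{μ₁μ₂}, …, g^{μ₁…μ_r} : U → ℝ be smooth functions, where each g^{μ₁…μₖ} (2 ≤ k ≤ r) is symmetric in its indices. Then, with summation over all repeated greek indices, Σ_{k=0}^{r} (∂_{μ₁}⋯∂_{μₖ} f) · g^{μ₁…μₖ} = Σ_{k=0}^{r} Σ_{l=0}^{r−k} binom(k+l, k) (−1)^l · ∂_{μ₁}⋯∂_{μₖ}( f · ∂_{ν₁}⋯∂_{ν_l} g^{μ₁…μₖ ν₁…ν_l} ). -/

import Mathlib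

open scoped BigOperators

noncomputable section

/-- Partial derivative of a function on `ℝⁿ` in the coordinate direction `μ`. -/
def pd {n : ℕ} (μ : Fin n) (f : (Fin n → ℝ) → ℝ) : (Fin n → ℝ) → ℝ :=
  fun x => fderiv ℝ f x (Pi.single μ 1)

/-- Iterated partial derivatives `∂_{μ₁}⋯∂_{μₖ}` along a list of coordinate directions. -/
def pds {n : ℕ} : List (Fin n) → ((Fin n → ℝ) → ℝ) → (Fin n → ℝ) → ℝ
  | [], f => f
  | μ :: l, f => pd μ (pds l f)

section helpers
variable {n : ℕ} {U : Set (Fin n → ℝ)}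

lemma pd_smooth (hU : IsOpen U) {f : (Fin n → ℝ) → ℝ}
    (hf : ContDiffOn ℝ (⊤ : ℕ∞) f U) (μ : Fin n) :
    ContDiffOn ℝ (⊤ : ℕ∞) (pd μ f) U := by
  have h1 : ContDiffOn ℝ (⊤ : ℕ∞) (fderiv ℝ f) U := hf.fderiv_of_isOpen hU (by exact_mod_cast le_top)
  exact h1.clm_apply contDiffOn_const

lemma pds_smooth (hU : IsOpen U) {f : (Fin n → ℝ) → ℝ}
    (hf : ContDiffOn ℝ (⊤ : ℕ∞) f U) (L : List (Fin n)) :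
    ContDiffOn ℝ (⊤ : ℕ∞) (pds L f) U := by
  induction L with
  | nil => exact hf
  | cons μ L ih => exact pd_smooth hU ih μ

lemma pd_congr (hU : IsOpen U) {p q : (Fin n → ℝ) → ℝ} (h : Set.EqOn p q U) (μ : Fin n) :
    Set.EqOn (pd μ p) (pd μ q) U := by
  intro x hx
  unfold pd
  rw [Filter.EventuallyEq.fderiv_eq (h.eventuallyEq_of_mem (hU.mem_nhds hx))]

lemma pds_congr (hU : IsOpen U) {p q : (Fin n → ℝ) → ℝ} (h : Set.EqOn p q U)
    (L : List (Fin n)) : Set.EqOn (pds L p) (pds L q) U := by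
  induction L with
  | nil => exact h
  | cons μ L ih => exact pd_congr hU ih μ

lemma pd_add {p q : (Fin n → ℝ) → ℝ} {x : Fin n → ℝ} (hp : DifferentiableAt ℝ p x)
    (hq : DifferentiableAt ℝ q x) (μ : Fin n) :
    pd μ (fun y => p y + q y) x = pd μ p x + pd μ q x := by
  unfold pd
  rw [fderiv_fun_add hp hq]; rfl

lemma pd_mul {p q : (Fin n → ℝ) → ℝ} {x : Fin n → ℝ} (hp : DifferentiableAt ℝ p x)
    (hq : DifferentiableAt ℝ q x) (μ : Fin n) :
    pd μ (fun y => p y * q y) x = pd μ p x * q x + p x * pd μ q x := by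
  unfold pd
  rw [fderiv_fun_mul hp hq]
  simp only [ContinuousLinearMap.add_apply, ContinuousLinearMap.smul_apply, smul_eq_mul]; ring

lemma diffAt (hU : IsOpen U) {p : (Fin n → ℝ) → ℝ} (hp : ContDiffOn ℝ (⊤ : ℕ∞) p U)
    {x : Fin n → ℝ} (hx : x ∈ U) : DifferentiableAt ℝ p x :=
  (hp.contDiffAt (hU.mem_nhds hx)).differentiableAt (by simp)

lemma pds_add (hU : IsOpen U) {p q : (Fin n → ℝ) → ℝ}
    (hp : ContDiffOn ℝ (⊤ : ℕ∞) p U) (hq : ContDiffOn ℝ (⊤ : ℕ∞) q U)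
    (L : List (Fin n)) :
    ∀ x ∈ U, pds L (fun y => p y + q y) x = pds L p x + pds L q x := by
  induction L with
  | nil => intro x _; rfl
  | cons μ L ih =>
    intro x hx
    show pd μ (pds L fun y => p y + q y) x = _
    rw [pd_congr hU (fun y hy => ih y hy) μ hx,
      pd_add (diffAt hU (pds_smooth hU hp L) hx) (diffAt hU (pds_smooth hU hq L) hx)]
    rfl

lemma pds_concat {f : (Fin n → ℝ) → ℝ} (ν : Fin n) :
    ∀ L : List (Fin n), pds (L ++ [ν]) f = pds L (pd ν f) := by
  intro L
  induction L with
  | nil => rfl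
  | cons μ L ih =>
    show pd μ (pds (L ++ [ν]) f) = _
    rw [ih]; rfl

end helpers

def cyc (m a b : ℕ) (hab : a + b < m) : Equiv.Perm (Fin m) where
  toFun i := if i.1 < a then i else if i.1 = a + b then ⟨a, by omega⟩
    else if h : i.1 < a + b then ⟨i.1 + 1, by omega⟩ else i
  invFun i := if i.1 < a then i else if i.1 = a then ⟨a + b, hab⟩
    else if i.1 ≤ a + b then ⟨i.1 - 1, by have := i.2; omega⟩ else i
  left_inv := by
    intro i
    apply Fin.ext
    have hi := i.2
    dsimp only
    split_ifs <;> simp_all <;> omega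
  right_inv := by
    intro i
    apply Fin.ext
    have hi := i.2
    dsimp only
    split_ifs <;> simp_all <;> omega

lemma cyc_val' (m a b : ℕ) (hab : a + b < m) (v : ℕ) (hv : v < m) :
    ((cyc m a b hab) ⟨v, hv⟩).1 = if v < a then v else if v = a + b then a
      else if v < a + b then v + 1 else v := by
  show (if v < a then (⟨v,hv⟩ : Fin m) else if v = a + b then (⟨a, by omega⟩ : Fin m)
    else if h : v < a + b then ⟨v + 1, by omega⟩ else ⟨v,hv⟩).1 = _
  split_ifs <;> rfl

def precomp {m k : ℕ} (σ : Equiv.Perm (Fin m)) : (Fin m → Fin k) ≃ (Fin m → Fin k) where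
  toFun μ := μ ∘ σ
  invFun μ := μ ∘ σ.symm
  left_inv μ := by funext i; simp
  right_inv μ := by funext i; simp

section listlemmas
variable {α : Type*}

lemma take_ofFn' {m : ℕ} (v : Fin m → α) (k : ℕ) (h : k ≤ m) :
    (List.ofFn v).take k = List.ofFn (fun i : Fin k => v ⟨i.1, by omega⟩) := by
  apply List.ext_getElem
  · simp [h]
  · intro i h1 h2
    simp [List.getElem_take]

lemma drop_ofFn' {m : ℕ} (v : Fin m → α) (k : ℕ) (h : k ≤ m) :
    (List.ofFn v).drop k = List.ofFn (fun i : Fin (m - k) => v ⟨k + i.1, by omega⟩) := by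
  apply List.ext_getElem
  · simp [h]
  · intro i h1 h2
    simp [List.getElem_drop]

lemma ofFn_last {a : ℕ} (v : Fin (a + 1) → α) :
    List.ofFn v = (List.ofFn fun i : Fin a => v i.castSucc) ++ [v (Fin.last a)] := by
  rw [List.ofFn_succ']
  exact List.concat_eq_append

end listlemmas

lemma ofFn_fin_congr {k : ℕ} {β : Type*} {p q : Fin k → β} (h : ∀ i, p i = q i) :
    List.ofFn p = List.ofFn q := by rw [funext h]

def Esummand {n : ℕ} (f : (Fin n → ℝ) → ℝ)
    (g : (k : ℕ) → (Fin k → Fin n) → (Fin n → ℝ) → ℝ)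
    (m a b c : ℕ) (h : a + b + c = m) (x : Fin n → ℝ) (μ : Fin m → Fin n) : ℝ :=
  pds (List.ofFn fun i : Fin a => μ ⟨i.1, by have := i.2; omega⟩)
    (fun y => pds (List.ofFn fun i : Fin b => μ ⟨a + i.1, by have := i.2; omega⟩) f y *
      pds (List.ofFn fun i : Fin c => μ ⟨a + b + i.1, by have := i.2; omega⟩) (g m μ) y) x

def E {n : ℕ} (f : (Fin n → ℝ) → ℝ) (g : (k : ℕ) → (Fin k → Fin n) → (Fin n → ℝ) → ℝ)
    (m a b c : ℕ) (h : a + b + c = m) (x : Fin n → ℝ) : ℝ :=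
  ∑ μ : Fin m → Fin n, Esummand f g m a b c h x μ

def T2s {n : ℕ} (f : (Fin n → ℝ) → ℝ)
    (g : (k : ℕ) → (Fin k → Fin n) → (Fin n → ℝ) → ℝ)
    (m a b c : ℕ) (h : a + 1 + b + c = m) (x : Fin n → ℝ) (μ : Fin m → Fin n) : ℝ :=
  pds (List.ofFn fun i : Fin a => μ ⟨i.1, by have := i.2; omega⟩)
    (fun y => pds (List.ofFn fun i : Fin b => μ ⟨a + 1 + i.1, by have := i.2; omega⟩) f y *
      pd (μ ⟨a, by omega⟩)
        (pds (List.ofFn fun i : Fin c => μ ⟨a + 1 + b + i.1, by have := i.2; omega⟩) (g m μ)) y) x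

lemma ofFn_last_congr {k : ℕ} {β : Type*} {p : Fin (k+1) → β} {q : Fin k → β} {y : β}
    (hs : ∀ i : Fin k, p i.castSucc = q i) (h0 : p (Fin.last k) = y) :
    List.ofFn p = List.ofFn q ++ [y] := by
  rw [ofFn_last, show (fun i => p i.castSucc) = q from funext hs, h0]

lemma ofFn_succ_congr {k : ℕ} {β : Type*} {p : Fin (k+1) → β} {y : β} {q : Fin k → β}
    (h0 : p 0 = y) (hs : ∀ i : Fin k, p i.succ = q i) :
    List.ofFn p = y :: List.ofFn q := by
  rw [List.ofFn_succ, h0, show (fun i => p i.succ) = q from funext hs]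

lemma E_rec {n r : ℕ} {U : Set (Fin n → ℝ)} (hU : IsOpen U)
    {f : (Fin n → ℝ) → ℝ} (hf : ContDiffOn ℝ (⊤ : ℕ∞) f U)
    {g : (k : ℕ) → (Fin k → Fin n) → (Fin n → ℝ) → ℝ}
    (hg : ∀ k, k ≤ r → ∀ μ, ContDiffOn ℝ (⊤ : ℕ∞) (g k μ) U)
    (hsym : ∀ k, k ≤ r → ∀ (σ : Equiv.Perm (Fin k)) (μ : Fin k → Fin n),
      g k (μ ∘ σ) = g k μ)
    (m a b c : ℕ) (h : a + 1 + b + c = m) (hm : m ≤ r)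
    {x : Fin n → ℝ} (hx : x ∈ U) :
    E f g m (a+1) b c (by omega) x
      = E f g m a (b+1) c (by omega) x + E f g m a b (c+1) (by omega) x := by
  have hab : a + b < m := by omega
  have step : ∀ μ : Fin m → Fin n,
      Esummand f g m (a+1) b c (by omega) x μ
        = Esummand f g m a (b+1) c (by omega) x μ + T2s f g m a b c (by omega) x μ := by
    intro μ
    unfold Esummand T2s
    have hPs : ContDiffOn ℝ (⊤ : ℕ∞)
        (pds (List.ofFn fun i : Fin b => μ ⟨a + 1 + i.1, by have := i.2; omega⟩) f) U :=
      pds_smooth hU hf _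
    have hQs : ContDiffOn ℝ (⊤ : ℕ∞)
        (pds (List.ofFn fun i : Fin c => μ ⟨a + 1 + b + i.1, by have := i.2; omega⟩) (g m μ)) U :=
      pds_smooth hU (hg m hm μ) _
    have l1 : (List.ofFn fun i : Fin (a+1) => μ ⟨i.1, by have := i.2; omega⟩)
        = (List.ofFn fun i : Fin a => μ ⟨i.1, by have := i.2; omega⟩)
          ++ [μ ⟨a, by omega⟩] :=
      ofFn_last_congr (fun i => congrArg μ (Fin.ext (by simp)))
        (congrArg μ (Fin.ext (by simp)))
    rw [l1, pds_concat]
    have l2 : Set.EqOn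
        (pd (μ ⟨a, by omega⟩) (fun y =>
          pds (List.ofFn fun i : Fin b => μ ⟨a + 1 + i.1, by have := i.2; omega⟩) f y *
          pds (List.ofFn fun i : Fin c => μ ⟨a + 1 + b + i.1, by have := i.2; omega⟩) (g m μ) y))
        (fun y =>
          (fun z => pd (μ ⟨a, by omega⟩)
            (pds (List.ofFn fun i : Fin b => μ ⟨a + 1 + i.1, by have := i.2; omega⟩) f) z *
            pds (List.ofFn fun i : Fin c => μ ⟨a + 1 + b + i.1, by have := i.2; omega⟩) (g m μ) z) y
          + (fun z =>
            pds (List.ofFn fun i : Fin b => μ ⟨a + 1 + i.1, by have := i.2; omega⟩) f z *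
            pd (μ ⟨a, by omega⟩)
              (pds (List.ofFn fun i : Fin c => μ ⟨a + 1 + b + i.1, by have := i.2; omega⟩)
                (g m μ)) z) y) U :=
      fun y hy => pd_mul (diffAt hU hPs hy) (diffAt hU hQs hy) _
    rw [pds_congr hU l2 _ hx,
      pds_add hU ((pd_smooth hU hPs _).mul hQs) (hPs.mul (pd_smooth hU hQs _)) _ x hx]
    congr 1
    have l3 : (List.ofFn fun i : Fin (b+1) => μ ⟨a + i.1, by have := i.2; omega⟩)
        = (μ ⟨a, by omega⟩) ::
          (List.ofFn fun i : Fin b => μ ⟨a + 1 + i.1, by have := i.2; omega⟩) :=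
      ofFn_succ_congr (congrArg μ (Fin.ext (by simp)))
        (fun i => congrArg μ (Fin.ext (by simp only [Fin.val_succ]; omega)))
    have l4 : (List.ofFn fun i : Fin c => μ ⟨a + (b+1) + i.1, by have := i.2; omega⟩)
        = (List.ofFn fun i : Fin c => μ ⟨a + 1 + b + i.1, by have := i.2; omega⟩) :=
      ofFn_fin_congr fun i => congrArg μ (Fin.ext (show a + (b+1) + i.1 = a + 1 + b + i.1 by omega))
    rw [l3, l4]
    rfl
  have e2 : ∀ μ : Fin m → Fin n,
      T2s f g m a b c (by omega) x μ
        = Esummand f g m a b (c+1) (by omega) x (μ ∘ (cyc m a b hab)) := by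
    intro μ
    unfold Esummand T2s
    rw [hsym m hm (cyc m a b hab) μ]
    have o1 : (List.ofFn fun i : Fin a => (μ ∘ (cyc m a b hab)) ⟨i.1, by have := i.2; omega⟩)
        = List.ofFn fun i : Fin a => μ ⟨i.1, by have := i.2; omega⟩ :=
      ofFn_fin_congr fun i => congrArg μ (Fin.ext
        (show ((cyc m a b hab) ⟨i.1, by have := i.2; omega⟩).1 = i.1 by
          rw [cyc_val']; have := i.2; split_ifs <;> omega))
    have o2 : (List.ofFn fun i : Fin b => (μ ∘ (cyc m a b hab)) ⟨a + i.1, by have := i.2; omega⟩)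
        = List.ofFn fun i : Fin b => μ ⟨a + 1 + i.1, by have := i.2; omega⟩ :=
      ofFn_fin_congr fun i => congrArg μ (Fin.ext
        (show ((cyc m a b hab) ⟨a + i.1, by have := i.2; omega⟩).1 = a + 1 + i.1 by
          rw [cyc_val']; have := i.2; split_ifs <;> omega))
    have o3 : (List.ofFn fun i : Fin (c+1) =>
          (μ ∘ (cyc m a b hab)) ⟨a + b + i.1, by have := i.2; omega⟩)
        = (μ ⟨a, by omega⟩) ::
          List.ofFn fun i : Fin c => μ ⟨a + 1 + b + i.1, by have := i.2; omega⟩ :=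
      ofFn_succ_congr
        (congrArg μ (Fin.ext (by
          simp only [Fin.val_zero, Nat.add_zero]
          rw [cyc_val']; split_ifs <;> omega)))
        (fun i => congrArg μ (Fin.ext (by
          simp only [Fin.val_succ]
          rw [cyc_val']; have := i.2; split_ifs <;> omega)))
    rw [o1, o2, o3]
    rfl
  calc E f g m (a+1) b c (by omega) x
      = ∑ μ : Fin m → Fin n,
          (Esummand f g m a (b+1) c (by omega) x μ + T2s f g m a b c (by omega) x μ) :=
        Finset.sum_congr rfl (fun μ _ => step μ)
    _ = (∑ μ : Fin m → Fin n, Esummand f g m a (b+1) c (by omega) x μ)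
        + ∑ μ : Fin m → Fin n, T2s f g m a b c (by omega) x μ := Finset.sum_add_distrib
    _ = E f g m a (b+1) c (by omega) x + E f g m a b (c+1) (by omega) x := by
        have e3 : (∑ μ : Fin m → Fin n, T2s f g m a b c (by omega) x μ)
            = ∑ μ : Fin m → Fin n, Esummand f g m a b (c+1) (by omega) x μ :=
          Fintype.sum_equiv (precomp (cyc m a b hab)) _ _ (fun μ => e2 μ)
        rw [e3]
        rfl

def E0 {n : ℕ} (f : (Fin n → ℝ) → ℝ) (g : (k : ℕ) → (Fin k → Fin n) → (Fin n → ℝ) → ℝ)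
    (m b : ℕ) (x : Fin n → ℝ) : ℝ :=
  if h : b ≤ m then E f g m 0 b (m - b) (by omega) x else 0

lemma E_eq_E0 {n : ℕ} {f : (Fin n → ℝ) → ℝ}
    {g : (k : ℕ) → (Fin k → Fin n) → (Fin n → ℝ) → ℝ}
    {m b c : ℕ} (h : 0 + b + c = m) {x : Fin n → ℝ} :
    E f g m 0 b c h x = E0 f g m b x := by
  have hc : c = m - b := by omega
  subst hc
  rw [E0, dif_pos (by omega)]

lemma choose_algebra (a : ℕ) (F : ℕ → ℝ) :
    ∑ j ∈ Finset.range (a+1+1), (((a+1).choose j : ℕ) : ℝ) * F j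
      = (∑ j ∈ Finset.range (a+1), ((a.choose j : ℕ) : ℝ) * F (j+1))
        + ∑ j ∈ Finset.range (a+1), ((a.choose j : ℕ) : ℝ) * F j := by
  rw [Finset.sum_range_succ' (fun j => (((a+1).choose j : ℕ) : ℝ) * F j)]
  have h1 : ∀ j ∈ Finset.range (a+1), (((a+1).choose (j+1) : ℕ) : ℝ) * F (j+1)
      = ((a.choose j : ℕ) : ℝ) * F (j+1) + ((a.choose (j+1) : ℕ) : ℝ) * F (j+1) := by
    intro j _
    rw [Nat.choose_succ_succ]
    push_cast
    ring
  rw [Finset.sum_congr rfl h1, Finset.sum_add_distrib]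
  have h2 : ∑ j ∈ Finset.range (a+2), ((a.choose j : ℕ) : ℝ) * F j
      = ∑ j ∈ Finset.range (a+1), ((a.choose (j+1) : ℕ) : ℝ) * F (j+1)
        + ((a.choose 0 : ℕ) : ℝ) * F 0 := Finset.sum_range_succ' _ _
  have h3 : ∑ j ∈ Finset.range (a+2), ((a.choose j : ℕ) : ℝ) * F j
      = ∑ j ∈ Finset.range (a+1), ((a.choose j : ℕ) : ℝ) * F j := by
    rw [Finset.sum_range_succ]
    simp
  simp only [Nat.choose_zero_right, Nat.cast_one, one_mul] at h2 ⊢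
  linarith [h2, h3]

lemma E_pascal {n r : ℕ} {U : Set (Fin n → ℝ)} (hU : IsOpen U)
    {f : (Fin n → ℝ) → ℝ} (hf : ContDiffOn ℝ (⊤ : ℕ∞) f U)
    {g : (k : ℕ) → (Fin k → Fin n) → (Fin n → ℝ) → ℝ}
    (hg : ∀ k, k ≤ r → ∀ μ, ContDiffOn ℝ (⊤ : ℕ∞) (g k μ) U)
    (hsym : ∀ k, k ≤ r → ∀ (σ : Equiv.Perm (Fin k)) (μ : Fin k → Fin n),
      g k (μ ∘ σ) = g k μ)
    (m : ℕ) (hm : m ≤ r) {x : Fin n → ℝ} (hx : x ∈ U) :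
    ∀ a b c (h : a + b + c = m),
      E f g m a b c h x
        = ∑ j ∈ Finset.range (a+1), ((a.choose j : ℕ) : ℝ) * E0 f g m (b+j) x := by
  intro a
  induction a with
  | zero =>
    intro b c h
    rw [E_eq_E0 h]
    simp
  | succ a ih =>
    intro b c h
    rw [show E f g m (a+1) b c h x
          = E f g m a (b+1) c (by omega) x + E f g m a b (c+1) (by omega) x from
        E_rec hU hf hg hsym m a b c (by omega) hm hx,
      ih (b+1) c (by omega), ih b (c+1) (by omega)]
    have hsh : ∀ j ∈ Finset.range (a+1),
        ((a.choose j : ℕ) : ℝ) * E0 f g m (b+1+j) x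
          = ((a.choose j : ℕ) : ℝ) * E0 f g m (b+(j+1)) x := by
      intro j _
      rw [show b+1+j = b+(j+1) by omega]
    rw [Finset.sum_congr rfl hsh]
    rw [choose_algebra a (fun j => E0 f g m (b+j) x)]

open Finset in

open Finset in
lemma alt_real (s : ℕ) :
    ∑ t ∈ range (s+1), (-1:ℝ)^t * ((s.choose t : ℕ) : ℝ) = if s = 0 then 1 else 0 := by
  have h := Int.alternating_sum_range_choose (n := s)
  have h2 := congrArg (fun z : ℤ => (z : ℝ)) h
  push_cast at h2
  split_ifs at h2 ⊢ with hs
  · simpa using h2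
  · simpa using h2

open Finset in
lemma binom_inner (m j : ℕ) (hj : j ≤ m) :
    ∑ k ∈ Ico j (m+1), ((m.choose k : ℕ) : ℝ) * (-1:ℝ)^(m-k) * ((k.choose j : ℕ) : ℝ)
      = if j = m then 1 else 0 := by
  rw [Finset.sum_Ico_eq_sum_range]
  rw [show m + 1 - j = (m - j) + 1 by omega]
  have step : ∀ t ∈ range ((m-j)+1),
      ((m.choose (j+t) : ℕ) : ℝ) * (-1:ℝ)^(m-(j+t)) * (((j+t).choose j : ℕ) : ℝ)
        = ((m.choose j : ℕ) : ℝ) * (-1:ℝ)^(m-j) * ((-1:ℝ)^t * (((m-j).choose t : ℕ) : ℝ)) := by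
    intro t ht
    have ht' : t ≤ m - j := by simpa [Nat.lt_succ_iff] using ht
    have hc : m.choose (j+t) * (j+t).choose j = m.choose j * (m-j).choose t := by
      have := Nat.choose_mul (n := m) (k := j+t) (s := j) (by omega)
      simpa [show j + t - j = t by omega] using this
    have hsign : (-1:ℝ)^(m-(j+t)) = (-1:ℝ)^(m-j) * (-1:ℝ)^t := by
      have hexp : (m-(j+t)) + 2*t = (m-j) + t := by omega
      have h1 : (-1:ℝ)^((m-(j+t)) + 2*t) = (-1:ℝ)^(m-(j+t)) := by
        rw [pow_add, pow_mul]
        norm_num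
      rw [← h1, hexp, pow_add]
    have hcr : ((m.choose (j+t) : ℕ) : ℝ) * (((j+t).choose j : ℕ) : ℝ)
        = ((m.choose j : ℕ) : ℝ) * (((m-j).choose t : ℕ) : ℝ) := by exact_mod_cast congrArg (fun z : ℕ => (z : ℝ)) hc
    rw [hsign]
    linear_combination ((-1:ℝ)^(m-j) * (-1:ℝ)^t) * hcr
  rw [Finset.sum_congr rfl step, ← Finset.mul_sum, alt_real (m-j)]
  rcases eq_or_ne j m with hjm | hjm
  · subst hjm
    simp
  · rw [if_neg (by omega), if_neg hjm]
    ring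

open Finset in
lemma binom_inv (m : ℕ) (A : ℕ → ℝ) :
    ∑ k ∈ range (m+1), ((m.choose k : ℕ) : ℝ) * (-1:ℝ)^(m-k)
        * ∑ j ∈ range (k+1), ((k.choose j : ℕ) : ℝ) * A j
      = A m := by
  have expand : ∀ k ∈ range (m+1),
      ((m.choose k : ℕ) : ℝ) * (-1:ℝ)^(m-k) * ∑ j ∈ range (k+1), ((k.choose j : ℕ) : ℝ) * A j
        = ∑ j ∈ range (m+1),
            (if j ≤ k then ((m.choose k : ℕ) : ℝ) * (-1:ℝ)^(m-k) * (((k.choose j : ℕ) : ℝ) * A j)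
              else 0) := by
    intro k hk
    have hk' : k ≤ m := by simpa [Nat.lt_succ_iff] using hk
    rw [Finset.mul_sum]
    have e1 : ∑ j ∈ range (k+1),
        ((m.choose k : ℕ) : ℝ) * (-1:ℝ)^(m-k) * (((k.choose j : ℕ) : ℝ) * A j)
        = ∑ j ∈ range (k+1),
            (if j ≤ k then ((m.choose k : ℕ) : ℝ) * (-1:ℝ)^(m-k) * (((k.choose j : ℕ) : ℝ) * A j)
              else 0) := by
      apply Finset.sum_congr rfl
      intro j hj
      rw [if_pos (by simp [Nat.lt_succ_iff] at hj; omega)]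
    rw [e1]
    apply Finset.sum_subset (by intro t ht; simp [Nat.lt_succ_iff] at ht ⊢; omega)
    intro j _ hj
    rw [if_neg (by simp [Nat.lt_succ_iff] at hj; omega)]
  rw [Finset.sum_congr rfl expand, Finset.sum_comm]
  have colsum : ∀ j ∈ range (m+1),
      (∑ k ∈ range (m+1),
        (if j ≤ k then ((m.choose k : ℕ) : ℝ) * (-1:ℝ)^(m-k) * (((k.choose j : ℕ) : ℝ) * A j)
          else 0))
      = (if j = m then 1 else 0) * A j := by
    intro j hj
    have hj' : j ≤ m := by simpa [Nat.lt_succ_iff] using hj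
    have h1 : ∑ k ∈ range (m+1),
        (if j ≤ k then ((m.choose k : ℕ) : ℝ) * (-1:ℝ)^(m-k) * (((k.choose j : ℕ) : ℝ) * A j)
          else 0)
        = ∑ k ∈ Ico j (m+1),
            ((m.choose k : ℕ) : ℝ) * (-1:ℝ)^(m-k) * (((k.choose j : ℕ) : ℝ) * A j) := by
      rw [← Finset.sum_filter]
      congr 1
      ext k
      simp [Nat.lt_succ_iff, Finset.mem_Ico]
      omega
    rw [h1]
    have h2 : ∀ k ∈ Ico j (m+1),
        ((m.choose k : ℕ) : ℝ) * (-1:ℝ)^(m-k) * (((k.choose j : ℕ) : ℝ) * A j)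
          = (((m.choose k : ℕ) : ℝ) * (-1:ℝ)^(m-k) * ((k.choose j : ℕ) : ℝ)) * A j := by
      intro k _; ring
    rw [Finset.sum_congr rfl h2, ← Finset.sum_mul, binom_inner m j hj']
  rw [Finset.sum_congr rfl colsum]
  simp

open Finset in
lemma triangle (N : ℕ) (F : ℕ → ℕ → ℝ) :
    ∑ k ∈ range (N+1), ∑ l ∈ range (N-k+1), F k l
      = ∑ m ∈ range (N+1), ∑ k ∈ range (m+1), F k (m-k) := by
  induction N with
  | zero => simp
  | succ N ih =>
    have inner : ∀ k ∈ range (N+1), ∑ l ∈ range (N+1-k+1), F k l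
        = (∑ l ∈ range (N-k+1), F k l) + F k (N+1-k) := by
      intro k hk
      have hk' : k ≤ N := by simpa [Nat.lt_succ_iff] using hk
      rw [show N+1-k+1 = (N-k+1)+1 by omega, Finset.sum_range_succ,
        show N-k+1 = N+1-k by omega]
    have lhs : ∑ k ∈ range (N+1+1), ∑ l ∈ range (N+1-k+1), F k l
        = ((∑ k ∈ range (N+1), ∑ l ∈ range (N-k+1), F k l)
          + ∑ k ∈ range (N+1), F k (N+1-k)) + F (N+1) 0 := by
      rw [Finset.sum_range_succ, show N+1-(N+1)+1 = 1 by omega, Finset.sum_range_one,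
        Finset.sum_congr rfl inner, Finset.sum_add_distrib]
    rw [lhs, ih,
      Finset.sum_range_succ (fun m => ∑ k ∈ range (m+1), F k (m-k)) (N+1),
      Finset.sum_range_succ (fun k => F k (N+1-k)) (N+1),
      show N+1-(N+1) = 0 by omega]
    ring

lemma drop_ofFn2 {α : Type*} {k l : ℕ} (v : Fin (k+l) → α) :
    (List.ofFn v).drop k = List.ofFn (fun i : Fin l => v ⟨k + i.1, by have := i.2; omega⟩) := by
  apply List.ext_getElem
  · simp
  · intro i h1 h2
    simp [List.getElem_drop]

lemma Tlem {n : ℕ} (f : (Fin n → ℝ) → ℝ)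
    (g : (k : ℕ) → (Fin k → Fin n) → (Fin n → ℝ) → ℝ) (k l : ℕ) (x : Fin n → ℝ) :
    ∑ μ : Fin (k+l) → Fin n,
        pds ((List.ofFn μ).take k) (fun y => f y * pds ((List.ofFn μ).drop k) (g (k+l) μ) y) x
      = E f g (k+l) k 0 l (by omega) x := by
  show _ = ∑ μ : Fin (k+l) → Fin n, Esummand f g (k+l) k 0 l (by omega) x μ
  apply Finset.sum_congr rfl
  intro μ _
  have e1 : Esummand f g (k+l) k 0 l (by omega) x μ
      = pds (List.ofFn fun i : Fin k => μ ⟨i.1, by have := i.2; omega⟩)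
          (fun y => f y *
            pds (List.ofFn fun i : Fin l => μ ⟨k + i.1, by have := i.2; omega⟩)
              (g (k+l) μ) y) x := by
    unfold Esummand
    rw [ofFn_fin_congr
      (p := fun i : Fin l => μ ⟨k + 0 + i.1, by have := i.2; omega⟩)
      (q := fun i : Fin l => μ ⟨k + i.1, by have := i.2; omega⟩)
      (fun i => congrArg μ (Fin.ext (show k + 0 + i.1 = k + i.1 by omega)))]
    rfl
  rw [take_ofFn' μ k (by omega), drop_ofFn2 μ]
  exact e1.symm

lemma Llem {n : ℕ} (f : (Fin n → ℝ) → ℝ)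
    (g : (k : ℕ) → (Fin k → Fin n) → (Fin n → ℝ) → ℝ) (m : ℕ) (x : Fin n → ℝ) :
    ∑ μ : Fin m → Fin n, pds (List.ofFn μ) f x * g m μ x = E0 f g m m x := by
  rw [E0, dif_pos (le_refl m)]
  show _ = ∑ μ : Fin m → Fin n, Esummand f g m 0 m (m-m) (by omega) x μ
  apply Finset.sum_congr rfl
  intro μ _
  have hg4 : (List.ofFn fun i : Fin (m-m) => μ ⟨0 + m + i.1, by have := i.2; omega⟩)
      = ([] : List (Fin n)) := by
    apply List.eq_nil_of_length_eq_zero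
    simp
  have e1 : Esummand f g m 0 m (m-m) (by omega) x μ
      = pds (List.ofFn fun i : Fin m => μ i) f x * g m μ x := by
    unfold Esummand
    rw [hg4, ofFn_fin_congr
      (p := fun i : Fin m => μ ⟨0 + i.1, by have := i.2; omega⟩)
      (q := fun i : Fin m => μ i)
      (fun i => congrArg μ (Fin.ext (show 0 + i.1 = i.1 by omega)))]
    rfl
  rw [e1]

/-- **Inverse higher product formula, summed version** (Corollary A.4).
Let `U ⊆ ℝⁿ` be open and `f, g, g^μ, …, g^{μ₁…μ_r}` smooth on `U`, each `g^{μ₁…μₖ}`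
symmetric in its indices.  Then (summing over all repeated greek indices)
`Σ_{k=0}^{r} (∂_{μ₁}⋯∂_{μₖ} f) g^{μ₁…μₖ}
  = Σ_{k=0}^{r} Σ_{l=0}^{r−k} binom(k+l,k) (−1)^l
      ∂_{μ₁}⋯∂_{μₖ}( f ∂_{ν₁}⋯∂_{ν_l} g^{μ₁…μₖ ν₁…ν_l} )`. -/
theorem inverse_higher_product_formula_sum
    (n r : ℕ) (U : Set (Fin n → ℝ)) (hU : IsOpen U)
    (f : (Fin n → ℝ) → ℝ) (hf : ContDiffOn ℝ (⊤ : ℕ∞) f U)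
    (g : (k : ℕ) → (Fin k → Fin n) → (Fin n → ℝ) → ℝ)
    (hg : ∀ k, k ≤ r → ∀ μ, ContDiffOn ℝ (⊤ : ℕ∞) (g k μ) U)
    (hsym : ∀ k, k ≤ r → ∀ (σ : Equiv.Perm (Fin k)) (μ : Fin k → Fin n),
      g k (μ ∘ σ) = g k μ) :
    ∀ x ∈ U,
      ∑ k ∈ Finset.range (r + 1),
        ∑ μ : Fin k → Fin n, pds (List.ofFn μ) f x * g k μ x
      = ∑ k ∈ Finset.range (r + 1), ∑ l ∈ Finset.range (r - k + 1),
          ((k + l).choose k : ℝ) * (-1 : ℝ) ^ l *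
            ∑ μ : Fin (k + l) → Fin n,
              pds ((List.ofFn μ).take k)
                (fun y => f y * pds ((List.ofFn μ).drop k) (g (k + l) μ) y) x := by
  intro x hx
  have key : ∀ m, m ≤ r →
      (∑ k ∈ Finset.range (m+1),
        ((k + (m-k)).choose k : ℝ) * (-1 : ℝ) ^ (m-k) *
          ∑ μ : Fin (k + (m-k)) → Fin n,
            pds ((List.ofFn μ).take k)
              (fun y => f y * pds ((List.ofFn μ).drop k) (g (k + (m-k)) μ) y) x)
      = E0 f g m m x := by
    intro m hm
    have perk : ∀ k ∈ Finset.range (m+1),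
        ((k + (m-k)).choose k : ℝ) * (-1 : ℝ) ^ (m-k) *
          (∑ μ : Fin (k + (m-k)) → Fin n,
            pds ((List.ofFn μ).take k)
              (fun y => f y * pds ((List.ofFn μ).drop k) (g (k + (m-k)) μ) y) x)
        = ((m.choose k : ℕ) : ℝ) * (-1:ℝ)^(m-k)
            * ∑ j ∈ Finset.range (k+1), ((k.choose j : ℕ) : ℝ) * E0 f g m j x := by
      intro k hk
      have hk' : k ≤ m := by simp [Nat.lt_succ_iff] at hk; omega
      rw [Tlem f g k (m-k) x,
        E_pascal hU hf hg hsym (k+(m-k)) (by omega) hx k 0 (m-k) (by omega),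
        show k+(m-k) = m by omega]
      congr 1
      apply Finset.sum_congr rfl
      intro j _
      rw [Nat.zero_add]
    rw [Finset.sum_congr rfl perk, binom_inv m (fun j => E0 f g m j x)]
  calc ∑ k ∈ Finset.range (r + 1),
        ∑ μ : Fin k → Fin n, pds (List.ofFn μ) f x * g k μ x
      = ∑ m ∈ Finset.range (r+1), E0 f g m m x :=
        Finset.sum_congr rfl (fun m _ => Llem f g m x)
    _ = ∑ m ∈ Finset.range (r+1), ∑ k ∈ Finset.range (m+1),
          ((k + (m-k)).choose k : ℝ) * (-1 : ℝ) ^ (m-k) *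
            ∑ μ : Fin (k + (m-k)) → Fin n,
              pds ((List.ofFn μ).take k)
                (fun y => f y * pds ((List.ofFn μ).drop k) (g (k + (m-k)) μ) y) x := by
        apply Finset.sum_congr rfl
        intro m hm
        exact (key m (by simp [Nat.lt_succ_iff] at hm; omega)).symm
    _ = ∑ k ∈ Finset.range (r + 1), ∑ l ∈ Finset.range (r - k + 1),
          ((k + l).choose k : ℝ) * (-1 : ℝ) ^ l *
            ∑ μ : Fin (k + l) → Fin n,
              pds ((List.ofFn μ).take k)
                (fun y => f y * pds ((List.ofFn μ).drop k) (g (k + l) μ) y) x :=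
        (triangle r (fun k l =>
          ((k + l).choose k : ℝ) * (-1 : ℝ) ^ l *
            ∑ μ : Fin (k + l) → Fin n,
              pds ((List.ofFn μ).take k)
                (fun y => f y * pds ((List.ofFn μ).drop k) (g (k + l) μ) y) x)).symm

end
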